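/- Let d ≥ 1 be an integer, α_1, …, α_d real numbers with α_i > -1 for each i, λ = (d+1)^(d+1) and μ = ∏_{i=1}^d (α_i+1). Assume 2λμ > 1. Define f(z) = ∑_{n≥0} A_n z^(n(d+1)+1) where A_n = (-1)^n / (n! (d+1)^(n(d+1)) ∏_{i=1}^d (α_i+1)_n). Then for all z in the open unit disk, |f'(z)| ≤ (4λ²μ(μ+1) - 1)/(2λμ - 1)². -/

import Mathlib

/-!
Bound `f'` termwise on the unit disk by `∑ (n(d+1)+1) |A n|`. Since `(a)ₙ ≥ aⁿ` for `a ≥ 0`,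
`|A n| ≤ 1 / (n! (λμ)ⁿ)`, and `n! ≥ 2ⁿ⁻¹` turns this into `|A n| ≤ 2 yⁿ` with `y = 1/(2λμ) < 1`.
Summing the resulting arithmetico-geometric majorant (keeping the exact term `|A 0| = 1`) gives
`(t² + 2(d+1)t - 1)/(t-1)²` with `t = 2λμ`, and `d + 1 ≤ λ` finishes.
-/

open Complex

open Nat in
theorem two_pow_le_two_mul_factorial (n : ℕ) : 2 ^ n ≤ 2 * n ! := by
  cases n with
  | zero => simp
  | succ n =>
    rw [pow_succ']
    exact Nat.mul_le_mul_left 2 (by simpa [add_comm] using @factorial_mul_pow_le_factorial 1 n)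

theorem pow_le_ascPochhammer_eval {x : ℝ} (hx : 0 ≤ x) (n : ℕ) :
    x ^ n ≤ (ascPochhammer ℝ n).eval x := by
  induction n with
  | zero => simp
  | succ n ih =>
    rw [ascPochhammer_succ_eval, pow_succ]
    exact mul_le_mul ih (le_add_of_nonneg_right n.cast_nonneg) hx ((pow_nonneg hx n).trans ih)

theorem pow_prod_le_prod_ascPochhammer_eval {ι : Type*} [Fintype ι] {x : ι → ℝ}
    (hx : ∀ i, 0 ≤ x i) (n : ℕ) :
    (∏ i, x i) ^ n ≤ ∏ i, (ascPochhammer ℝ n).eval (x i) := by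
  rw [← Finset.prod_pow]
  exact Finset.prod_le_prod (fun i _ => pow_nonneg (hx i) n)
    fun i _ => pow_le_ascPochhammer_eval (hx i) n

open Nat in
theorem abs_neg_one_pow_div_factorial_mul_prod_ascPochhammer_le {ι : Type*} [Fintype ι]
    {x : ι → ℝ} (hx : ∀ i, 0 < x i) {c : ℝ} (hc : 0 < c) (n : ℕ) :
    |(-1) ^ n / (n ! * c ^ n * ∏ i, (ascPochhammer ℝ n).eval (x i))|
      ≤ 2 * (2 * c * ∏ i, x i)⁻¹ ^ n := by
  have hμ : 0 < ∏ i, x i := Finset.prod_pos fun i _ => hx i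
  have hP : 0 < ∏ i, (ascPochhammer ℝ n).eval (x i) :=
    Finset.prod_pos fun i _ => ascPochhammer_pos n _ (hx i)
  have hfact : (2 : ℝ) ^ n ≤ 2 * n ! := by exact_mod_cast two_pow_le_two_mul_factorial n
  rw [abs_div, abs_pow, abs_neg, abs_one, one_pow, abs_of_pos (by positivity), inv_pow,
    ← div_eq_mul_inv, div_le_div_iff₀ (by positivity) (by positivity), one_mul, mul_pow, mul_pow]
  calc 2 ^ n * c ^ n * (∏ i, x i) ^ n
      ≤ 2 * n ! * c ^ n * ∏ i, (ascPochhammer ℝ n).eval (x i) := by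
        gcongr
        exact pow_prod_le_prod_ascPochhammer_eval (fun i => (hx i).le) n
    _ = 2 * (n ! * c ^ n * ∏ i, (ascPochhammer ℝ n).eval (x i)) := by ring

theorem tsum_mul_linear_le_of_le_two_mul_inv_pow {c : ℕ → ℝ} {k t : ℝ} (hk : 0 ≤ k)
    (ht : 1 < t) (hc : ∀ n, 0 ≤ c n) (hc₀ : c 0 ≤ 1) (hct : ∀ n, c n ≤ 2 * t⁻¹ ^ n) :
    Summable (fun n : ℕ => c n * (k * n + 1)) ∧
      ∑' n : ℕ, c n * (k * n + 1) ≤ (t ^ 2 + 2 * k * t - 1) / (t - 1) ^ 2 := by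
  set y := t⁻¹
  have hy₀ : 0 ≤ y := inv_nonneg.2 (by linarith)
  have hy₁ : y < 1 := inv_lt_one_of_one_lt₀ ht
  set u := fun n : ℕ => c n * (k * n + 1)
  set M := fun n : ℕ => 2 * (k * (n * y ^ n) + y ^ n)
  have huM n : u n ≤ M n :=
    (mul_le_mul_of_nonneg_right (hct n) (by positivity)).trans_eq (by ring)
  have hM : HasSum M (2 * (k * (y / (1 - y) ^ 2) + (1 - y)⁻¹)) := by
    have hy : ‖y‖ < 1 := by rwa [Real.norm_of_nonneg hy₀]
    exact ((hasSum_coe_mul_geometric_of_norm_lt_one hy).mul_left k |>.add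
      (hasSum_geometric_of_lt_one hy₀ hy₁)).mul_left 2
  have hu : Summable u :=
    .of_nonneg_of_le (fun n => mul_nonneg (hc n) (by positivity)) huM hM.summable
  have hM₁ : HasSum (fun n => M (n + 1)) (2 * (k * (y / (1 - y) ^ 2) + (1 - y)⁻¹) - 2) := by
    rw [hasSum_nat_add_iff 1]
    simpa [M] using hM
  refine ⟨hu, ?_⟩
  -- the majorant overestimates the `n = 0` term by one
  calc ∑' n, u n = u 0 + ∑' n, u (n + 1) := hu.tsum_eq_zero_add
    _ ≤ 1 + (2 * (k * (y / (1 - y) ^ 2) + (1 - y)⁻¹) - 2) := by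
      gcongr
      · simpa [u] using hc₀
      · exact hM₁.tsum_eq ▸ Summable.tsum_le_tsum (fun n => huM (n + 1))
          ((summable_nat_add_iff 1).2 hu) hM₁.summable
    _ = (t ^ 2 + 2 * k * t - 1) / (t - 1) ^ 2 := by
      have : t - 1 ≠ 0 := by linarith
      simp only [y]
      field_simp
      ring

section PowerSeries

variable {𝕜 : Type*} [RCLike 𝕜]

theorem norm_mul_natCast_mul_pow_pred_le (a : 𝕜) (m : ℕ) {w : 𝕜} (hw : ‖w‖ ≤ 1) :
    ‖a * (m * w ^ (m - 1))‖ ≤ ‖a‖ * m := by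
  rw [norm_mul, norm_mul, norm_pow, RCLike.norm_natCast]
  gcongr
  exact mul_le_of_le_one_right m.cast_nonneg (pow_le_one₀ (norm_nonneg w) hw)

variable {a : ℕ → 𝕜} {e : ℕ → ℕ} {z : 𝕜}

theorem hasDerivAt_tsum_mul_pow (he : ∀ n, e n ≠ 0) (ha : Summable fun n => ‖a n‖ * e n)
    (hz : ‖z‖ < 1) :
    HasDerivAt (fun w => ∑' n, a n * w ^ e n) (∑' n, a n * (e n * z ^ (e n - 1))) z := by
  refine hasDerivAt_tsum_of_isPreconnected ha Metric.isOpen_ball (convex_ball 0 1).isPreconnected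
    (fun n w _ => (hasDerivAt_pow (e n) w).const_mul (a n))
    (fun n w hw => norm_mul_natCast_mul_pow_pred_le (a n) (e n) (mem_ball_zero_iff.1 hw).le)
    (Metric.mem_ball_self one_pos) ?_ (mem_ball_zero_iff.2 hz)
  simp [zero_pow (he _)]

theorem norm_deriv_tsum_mul_pow_le (he : ∀ n, e n ≠ 0) (ha : Summable fun n => ‖a n‖ * e n)
    (hz : ‖z‖ < 1) :
    ‖deriv (fun w => ∑' n, a n * w ^ e n) z‖ ≤ ∑' n, ‖a n‖ * e n := by
  have hbound n := norm_mul_natCast_mul_pow_pred_le (a n) (e n) hz.le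
  rw [(hasDerivAt_tsum_mul_pow he ha hz).deriv]
  exact (norm_tsum_le_tsum_norm (.of_nonneg_of_le (fun _ => norm_nonneg _) hbound ha)).trans
    (Summable.tsum_le_tsum hbound (.of_nonneg_of_le (fun _ => norm_nonneg _) hbound ha) ha)

end PowerSeries

theorem hyperBessel_deriv_abs_bound_general (d : ℕ) (α : Fin d → ℝ)
    (hα : ∀ i, α i > -1)
    (lam mu : ℝ) (hlam : lam = (d + 1 : ℝ) ^ (d + 1)) (hmu : mu = ∏ i, (α i + 1))
    (hcond : 2 * lam * mu > 1)
    (A : ℕ → ℝ)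
    (hA : ∀ n, A n = (-1) ^ n /
      (n.factorial * (d + 1 : ℝ) ^ (n * (d + 1)) * ∏ i, (ascPochhammer ℝ n).eval (α i + 1)))
    (f : ℂ → ℂ) (hf : ∀ z, f z = ∑' n : ℕ, (A n : ℂ) * z ^ (n * (d + 1) + 1)) :
    ∀ z : ℂ, ‖z‖ < 1 →
      ‖deriv f z‖ ≤ (4 * lam ^ 2 * mu * (mu + 1) - 1) / (2 * lam * mu - 1) ^ 2 := by
  intro z hz
  have hα₁ i : 0 < α i + 1 := by linarith [hα i]
  have hlam_pos : 0 < lam := hlam ▸ by positivity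
  have hd_le : (d + 1 : ℝ) ≤ lam := 
    hlam ▸ le_self_pow₀ (le_add_of_nonneg_left d.cast_nonneg) d.succ_ne_zero
  have hcoeff n : |A n| ≤ 2 * (2 * lam * mu)⁻¹ ^ n := by
    rw [hA, pow_mul', ← hlam, hmu]
    exact abs_neg_one_pow_div_factorial_mul_prod_ascPochhammer_le hα₁ hlam_pos n
  obtain ⟨hsum, hle⟩ := tsum_mul_linear_le_of_le_two_mul_inv_pow (k := d + 1) (by positivity)
    hcond (fun n => abs_nonneg (A n)) (by simp [hA]) hcoeff
  have hnorm : (fun n => ‖(A n : ℂ)‖ * ((n * (d + 1) + 1 : ℕ) : ℝ)) =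
      fun n => |A n| * ((d + 1) * n + 1) := by
    funext n
    push_cast
    rw [norm_real, Real.norm_eq_abs]
    ring
  calc ‖deriv f z‖ ≤ ∑' n, ‖(A n : ℂ)‖ * ((n * (d + 1) + 1 : ℕ) : ℝ) := funext hf ▸
        norm_deriv_tsum_mul_pow_le (fun n => Nat.succ_ne_zero _) (hnorm ▸ hsum) hz
    _ ≤ ((2 * lam * mu) ^ 2 + 2 * (d + 1) * (2 * lam * mu) - 1) / (2 * lam * mu - 1) ^ 2 :=
        hnorm ▸ hle
    _ ≤ _ := by
        gcongr
        nlinarith [mul_le_mul_of_nonneg_left hd_le (by linarith : 0 ≤ 4 * lam * mu)]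

theorem hyperBessel_deriv_abs_bound (d : ℕ) (hd : 1 ≤ d) (α : Fin d → ℝ)
    (hα : ∀ i, α i > -1)
    (lam mu : ℝ) (hlam : lam = (d + 1 : ℝ) ^ (d + 1)) (hmu : mu = ∏ i, (α i + 1))
    (hcond : 2 * lam * mu > 1)
    (A : ℕ → ℝ)
    (hA : ∀ n, A n = (-1) ^ n /
      (n.factorial * (d + 1 : ℝ) ^ (n * (d + 1)) * ∏ i, (ascPochhammer ℝ n).eval (α i + 1)))
    (f : ℂ → ℂ) (hf : ∀ z, f z = ∑' n : ℕ, (A n : ℂ) * z ^ (n * (d + 1) + 1)) :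
    ∀ z : ℂ, ‖z‖ < 1 →
      ‖deriv f z‖ ≤ (4 * lam ^ 2 * mu * (mu + 1) - 1) / (2 * lam * mu - 1) ^ 2 :=
  hyperBessel_deriv_abs_bound_general d α hα lam mu hlam hmu hcond A hA f hf
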